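/- Let ψ : (0,∞) → ℝ be continuous and satisfy ψ(√(t_1 t_2)) ≤ (1/2)ψ(t_1) + (1/2)ψ(t_2) for all t_1, t_2 > 0. Let n ≥ 2 and let x, s, v ∈ Υ^n_+ satisfy det̄(v ◇ v) = det̄(x)·det̄(s), Tr(v ◇ v) = Tr(x ◇ s), and λ1(v)² = λ1(x)·λ1(s). Then Ψ(v) ≤ (1/2)Ψ(x) + (1/2)Ψ(s). -/

import Mathlib

noncomputable section

open Real Finset

/-- Euclidean dot product of two vectors in `ℝ^n`. -/
def dotp {n : ℕ} (x y : Fin n → ℝ) : ℝ := ∑ i, x i * y i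

/-- Euclidean norm of a vector in `ℝ^n`. -/
def enormR {n : ℕ} (x : Fin n → ℝ) : ℝ := Real.sqrt (∑ i, (x i) ^ 2)

/-- The tail `x̄ = (x_3, …, x_n)` of a vector, embedded back into `ℝ^n`
(first two coordinates replaced by `0`). Indices are 0-based, so the tail
consists of the coordinates with index `≥ 2`. -/
def tl {n : ℕ} (x : Fin (n + 2) → ℝ) : Fin (n + 2) → ℝ :=
  fun i => if 2 ≤ (i : ℕ) then x i else 0

/-- The eigenvalue `λ1(x) = x_1 - x_2`. -/
def lam1 {n : ℕ} (x : Fin (n + 2) → ℝ) : ℝ := x 0 - x 1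

/-- The eigenvalue `λ2(x) = x_1 + x_2 - √2 ‖x̄‖`. -/
def lam2 {n : ℕ} (x : Fin (n + 2) → ℝ) : ℝ := x 0 + x 1 - Real.sqrt 2 * enormR (tl x)

/-- The eigenvalue `λ4(x) = x_1 + x_2 + √2 ‖x̄‖`. -/
def lam4 {n : ℕ} (x : Fin (n + 2) → ℝ) : ℝ := x 0 + x 1 + Real.sqrt 2 * enormR (tl x)

/-- The Jordan-type product `x ◇ s`. -/
def diam {n : ℕ} (x s : Fin (n + 2) → ℝ) : Fin (n + 2) → ℝ :=
  fun i =>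
    if (i : ℕ) = 0 then dotp x s
    else if (i : ℕ) = 1 then x 1 * s 0 + x 0 * s 1 + dotp (tl x) (tl s)
    else (s 0 + s 1) * x i + (x 0 + x 1) * s i

/-- The trace `Tr(x) = 2 x_1`. -/
def trace {n : ℕ} (x : Fin (n + 2) → ℝ) : ℝ := 2 * x 0

/-- `det̄(x) = (x_1 + x_2)² - 2 ‖x̄‖²`. -/
def detbar {n : ℕ} (x : Fin (n + 2) → ℝ) : ℝ := (x 0 + x 1) ^ 2 - 2 * (enormR (tl x)) ^ 2

/-- `det(x) = x_1² + x_2² - ‖x̄‖²`. -/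
def det2 {n : ℕ} (x : Fin (n + 2) → ℝ) : ℝ := (x 0) ^ 2 + (x 1) ^ 2 - (enormR (tl x)) ^ 2

/-- `det_(x) = 2 x_1 x_2 - ‖x̄‖²`. -/
def detund {n : ℕ} (x : Fin (n + 2) → ℝ) : ℝ := 2 * x 0 * x 1 - (enormR (tl x)) ^ 2

/-- Membership in the type-2 second order cone `Υ^n`. -/
def inCone {n : ℕ} (x : Fin (n + 2) → ℝ) : Prop := 0 ≤ lam1 x ∧ 0 ≤ lam2 x

/-- Membership in the interior `Υ^n_+` of the type-2 second order cone. -/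
def inConeInt {n : ℕ} (x : Fin (n + 2) → ℝ) : Prop := 0 < lam1 x ∧ 0 < lam2 x

/-- The unit element `e = (1, 0, …, 0)`. -/
def eVec {n : ℕ} : Fin (n + 2) → ℝ := fun i => if (i : ℕ) = 0 then 1 else 0

/-- The spectral vector `g(x) = g(λ1(x)) v1 + g(λ2(x)) v2 + g(λ4(x)) v4`.
Its tail entries are `(g(λ4(x)) - g(λ2(x))) xᵢ / (2√2 ‖x̄‖)` when `x̄ ≠ 0`;
when `x̄ = 0` the written formula evaluates to `0` automatically since then
`xᵢ = 0` for `i ≥ 2`. -/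
def specVec {n : ℕ} (g : ℝ → ℝ) (x : Fin (n + 2) → ℝ) : Fin (n + 2) → ℝ :=
  fun i =>
    if (i : ℕ) = 0 then (1 / 2) * g (lam1 x) + (1 / 4) * g (lam2 x) + (1 / 4) * g (lam4 x)
    else if (i : ℕ) = 1 then -(1 / 2) * g (lam1 x) + (1 / 4) * g (lam2 x) + (1 / 4) * g (lam4 x)
    else (g (lam4 x) - g (lam2 x)) * x i / (2 * Real.sqrt 2 * enormR (tl x))

/-- The barrier value `Ψ(x) = ψ(λ1(x)) + ½ψ(λ2(x)) + ½ψ(λ4(x))`. -/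
def Psi {n : ℕ} (g : ℝ → ℝ) (x : Fin (n + 2) → ℝ) : ℝ :=
  g (lam1 x) + (1 / 2) * g (lam2 x) + (1 / 2) * g (lam4 x)

/-- The barrier value of a block vector. -/
def PsiBlk {N : ℕ} {nf : Fin N → ℕ} (g : ℝ → ℝ) (v : ∀ j, Fin (nf j + 2) → ℝ) : ℝ :=
  ∑ j, Psi g (v j)

/-- The norm-based proximity `δ(v) = (1/√2) (Σⱼ ‖ψ'(vʲ)‖²)^{1/2}`. -/
def deltaBlk {N : ℕ} {nf : Fin N → ℕ} (g : ℝ → ℝ) (v : ∀ j, Fin (nf j + 2) → ℝ) : ℝ :=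
  (1 / Real.sqrt 2) * Real.sqrt (∑ j, (enormR (specVec g (v j))) ^ 2)

/-- `λ_min(v) = minⱼ min{λ1(vʲ), λ2(vʲ)}`. -/
def lamMin {N : ℕ} {nf : Fin N → ℕ} (v : ∀ j, Fin (nf j + 2) → ℝ) : ℝ :=
  ⨅ j, min (lam1 (v j)) (lam2 (v j))


/-! ### Auxiliary lemmas -/

section Aux

open Filter

lemma midpt_convex (g : ℝ → ℝ) (hg : Continuous g)
    (hm : ∀ a b : ℝ, g ((a + b) / 2) ≤ g a / 2 + g b / 2)
    (lam x y : ℝ) (h0 : 0 ≤ lam) (h1 : lam ≤ 1) :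
    g (lam * x + (1 - lam) * y) ≤ lam * g x + (1 - lam) * g y := by
  set P : ℝ → Prop := fun t => g (t * x + (1 - t) * y) ≤ t * g x + (1 - t) * g y with hP
  have hmid : ∀ s t : ℝ, P s → P t → P ((s + t) / 2) := by
    intro s t hs ht
    simp only [hP] at hs ht ⊢
    have heq : ((s + t) / 2) * x + (1 - (s + t) / 2) * y
        = ((s * x + (1 - s) * y) + (t * x + (1 - t) * y)) / 2 := by ring
    rw [heq]
    calc g _ ≤ g (s * x + (1 - s) * y) / 2 + g (t * x + (1 - t) * y) / 2 := hm _ _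
      _ ≤ (s + t) / 2 * g x + (1 - (s + t) / 2) * g y := by linarith
  have hdy : ∀ m k : ℕ, k ≤ 2 ^ m → P ((k : ℝ) / 2 ^ m) := by
    intro m
    induction m with
    | zero =>
      intro k hk
      interval_cases k
      · simp [hP]
      · simp [hP]
    | succ m ih =>
      intro k hk
      have h2 : (2:ℕ) ^ (m + 1) = 2 ^ m * 2 := pow_succ 2 m
      have h2R : (2:ℝ) ^ (m + 1) = 2 ^ m * 2 := pow_succ 2 m
      have h2pos : (0:ℝ) < 2 ^ m := by positivity
      rcases Nat.even_or_odd k with ⟨j, hj⟩ | ⟨j, hj⟩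
      · have hj2 : j ≤ 2 ^ m := by omega
        have hcast : ((k : ℝ)) / 2 ^ (m + 1) = (j : ℝ) / 2 ^ m := by
          rw [h2R, hj]; push_cast; field_simp; ring
        rw [hcast]; exact ih j hj2
      · have hj1 : j ≤ 2 ^ m := by omega
        have hj2 : j + 1 ≤ 2 ^ m := by omega
        have hcast : ((k : ℝ)) / 2 ^ (m + 1)
            = ((j : ℝ) / 2 ^ m + ((j + 1 : ℕ) : ℝ) / 2 ^ m) / 2 := by
          rw [h2R, hj]; push_cast; field_simp; ring
        rw [hcast]; exact hmid _ _ (ih j hj1) (ih (j + 1) hj2)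
  set a : ℕ → ℝ := fun m => (⌊lam * 2 ^ m⌋₊ : ℝ) / 2 ^ m with ha
  have hPa : ∀ m, P (a m) := by
    intro m
    apply hdy
    have h1' : lam * 2 ^ m ≤ ((2 ^ m : ℕ) : ℝ) := by
      push_cast
      nlinarith [pow_pos (by norm_num : (0:ℝ) < 2) m]
    calc ⌊lam * 2 ^ m⌋₊ ≤ ⌊((2 ^ m : ℕ) : ℝ)⌋₊ := Nat.floor_le_floor h1'
      _ = 2 ^ m := Nat.floor_natCast _
  have hbound : ∀ m : ℕ, lam - (1/2) ^ m ≤ a m ∧ a m ≤ lam := by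
    intro m
    have h2pos : (0:ℝ) < 2 ^ m := by positivity
    have hfl : (⌊lam * 2 ^ m⌋₊ : ℝ) ≤ lam * 2 ^ m := Nat.floor_le (by positivity)
    have hfl2 : lam * 2 ^ m < (⌊lam * 2 ^ m⌋₊ : ℝ) + 1 := Nat.lt_floor_add_one _
    constructor
    · have hpow : (1/2:ℝ) ^ m * 2 ^ m = 1 := by rw [← mul_pow]; norm_num
      rw [ha]; simp only
      rw [le_div_iff₀ h2pos]
      nlinarith [hfl2, hpow]
    · rw [ha]; simp only
      rw [div_le_iff₀ h2pos]; linarith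
  have hbound1 : ∀ m : ℕ, lam - (1/2) ^ m ≤ a m := fun m => (hbound m).1
  have hlim : Tendsto a atTop (nhds lam) := by
    have hlo : Tendsto (fun m : ℕ => lam - (1/2) ^ m) atTop (nhds (lam - 0)) :=
      tendsto_const_nhds.sub (tendsto_pow_atTop_nhds_zero_of_lt_one (by norm_num) (by norm_num))
    rw [sub_zero] at hlo
    exact tendsto_of_tendsto_of_tendsto_of_le_of_le hlo tendsto_const_nhds
      hbound1 (fun m => (hbound m).2)
  have c1 : Tendsto (fun m => g (a m * x + (1 - a m) * y)) atTop
      (nhds (g (lam * x + (1 - lam) * y))) :=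
    (hg.tendsto _).comp ((hlim.mul_const x).add ((tendsto_const_nhds.sub hlim).mul_const y))
  have c2 : Tendsto (fun m => a m * g x + (1 - a m) * g y) atTop
      (nhds (lam * g x + (1 - lam) * g y)) :=
    (hlim.mul_const (g x)).add ((tendsto_const_nhds.sub hlim).mul_const (g y))
  exact le_of_tendsto_of_tendsto' c1 c2 hPa

lemma two_point (g : ℝ → ℝ) (hg : Continuous g)
    (hm : ∀ a b : ℝ, g ((a + b) / 2) ≤ g a / 2 + g b / 2)
    {u u' w w' : ℝ} (h1 : u' ≤ u) (h2 : u ≤ w) (h3 : w ≤ w')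
    (hsum : u + w = u' + w') : g u + g w ≤ g u' + g w' := by
  rcases eq_or_lt_of_le (le_trans h1 (le_trans h2 h3)) with he | hlt
  · have hu : u = u' := le_antisymm (by linarith) h1
    have hw : w = w' := by linarith
    rw [hu, hw]
  · set lam := (w' - u) / (w' - u') with hlam
    have hd : 0 < w' - u' := by linarith
    have hl0 : 0 ≤ lam := div_nonneg (by linarith) hd.le
    have hl1 : lam ≤ 1 := by rw [hlam, div_le_one hd]; linarith
    have hu : u = lam * u' + (1 - lam) * w' := by
      rw [hlam]; field_simp; ring
    have hw : w = (1 - lam) * u' + lam * w' := by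
      have : w = u' + w' - u := by linarith
      rw [this, hlam]; field_simp; ring
    calc g u + g w ≤ (lam * g u' + (1 - lam) * g w') + ((1 - lam) * g u' + lam * g w') := by
          apply add_le_add
          · rw [hu]; exact midpt_convex g hg hm lam u' w' hl0 hl1
          · rw [hw]
            have := midpt_convex g hg hm (1 - lam) u' w' (by linarith) (by linarith)
            rw [show (1:ℝ) - (1 - lam) = lam by ring] at this
            exact this
      _ = g u' + g w' := by ring

lemma sum_split {n : ℕ} (F : Fin (n + 2) → ℝ) :
    ∑ i, F i = F 0 + F 1 + ∑ i : Fin n, F i.succ.succ := by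
  rw [Fin.sum_univ_succ, Fin.sum_univ_succ, Fin.succ_zero_eq_one]; ring

lemma tl_zero {n : ℕ} (x : Fin (n + 2) → ℝ) : tl x 0 = 0 := by simp [tl]
lemma tl_one {n : ℕ} (x : Fin (n + 2) → ℝ) : tl x 1 = 0 := by simp [tl]
lemma tl_ss {n : ℕ} (x : Fin (n + 2) → ℝ) (i : Fin n) :
    tl x i.succ.succ = x i.succ.succ := by
  have : 2 ≤ ((i.succ.succ : Fin (n + 2)) : ℕ) := by simp [Fin.val_succ]
  simp [tl, this]

lemma enorm_sq {m : ℕ} (x : Fin m → ℝ) : (enormR x) ^ 2 = ∑ i, (x i) ^ 2 :=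
  Real.sq_sqrt (by positivity)

lemma enorm_nonneg' {m : ℕ} (x : Fin m → ℝ) : 0 ≤ enormR x := Real.sqrt_nonneg _

lemma dotp_tl_self {n : ℕ} (x : Fin (n + 2) → ℝ) :
    dotp (tl x) (tl x) = (enormR (tl x)) ^ 2 := by
  rw [enorm_sq]; unfold dotp; exact Finset.sum_congr rfl (fun i _ => (sq (tl x i)).symm)

lemma dotp_split {n : ℕ} (x s : Fin (n + 2) → ℝ) :
    dotp x s = x 0 * s 0 + x 1 * s 1 + dotp (tl x) (tl s) := by
  unfold dotp
  rw [sum_split (fun i => x i * s i), sum_split (fun i => tl x i * tl s i)]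
  simp only [tl_zero, tl_one, tl_ss, zero_mul, add_zero, zero_add]

lemma diam_zero {n : ℕ} (x s : Fin (n + 2) → ℝ) : diam x s 0 = dotp x s := by simp [diam]
lemma diam_one {n : ℕ} (x s : Fin (n + 2) → ℝ) :
    diam x s 1 = x 1 * s 0 + x 0 * s 1 + dotp (tl x) (tl s) := by simp [diam]

lemma enorm_tl_diam_self {n : ℕ} (v : Fin (n + 2) → ℝ) :
    (enormR (tl (diam v v))) ^ 2 = 4 * (v 0 + v 1) ^ 2 * (enormR (tl v)) ^ 2 := by
  rw [enorm_sq, enorm_sq, Finset.mul_sum]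
  apply Finset.sum_congr rfl
  intro i _
  by_cases h : 2 ≤ (i : ℕ)
  · have h0 : ¬ ((i : ℕ) = 0) := by omega
    have h1 : ¬ ((i : ℕ) = 1) := by omega
    simp only [tl, diam, if_pos h, if_neg h0, if_neg h1]
    ring
  · simp only [tl, if_neg h]; ring

lemma dotp_le_enorm {n : ℕ} (x s : Fin (n + 2) → ℝ) :
    dotp (tl x) (tl s) ≤ enormR (tl x) * enormR (tl s) := by
  exact Real.sum_mul_le_sqrt_mul_sqrt _ _ _

lemma majorize {b c p q : ℝ} (hb : 0 < b) (hp : 0 < p) (hq : 0 < q)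
    (hpq : p ≤ q) (hprod : b * c = p * q) (hsum : b ^ 2 + c ^ 2 ≤ p ^ 2 + q ^ 2) :
    p ≤ b ∧ c ≤ q := by
  have hbp : p ≤ b := by
    by_contra hcon
    push_neg at hcon
    have h1 : b ^ 2 < p ^ 2 := by nlinarith
    have h2 : p ^ 2 ≤ q ^ 2 := by nlinarith
    have hfac : 0 < (p ^ 2 - b ^ 2) * (q ^ 2 - b ^ 2) :=
      mul_pos (by linarith) (by linarith)
    have hprod2 : b ^ 2 * c ^ 2 = p ^ 2 * q ^ 2 := by
      rw [← mul_pow, hprod, mul_pow]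
    nlinarith [hprod2, hfac, mul_le_mul_of_nonneg_left hsum (sq_nonneg b)]
  refine ⟨hbp, ?_⟩
  nlinarith [hprod, mul_le_mul_of_nonneg_left hbp hq.le]

end Aux

/-- let `ψ : (0,∞) → ℝ` be continuous with
`ψ(√(t₁t₂)) ≤ ½ψ(t₁) + ½ψ(t₂)` for all `t₁, t₂ > 0`, and let
`x, s, v ∈ Υ^n_+` satisfy `det̄(v ◇ v) = det̄(x) det̄(s)`,
`Tr(v ◇ v) = Tr(x ◇ s)` and `λ1(v)² = λ1(x) λ1(s)`.
Then `Ψ(v) ≤ ½Ψ(x) + ½Ψ(s)`. -/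
theorem stmt13 (n : ℕ) (f : ℝ → ℝ) (hcont : ContinuousOn f (Set.Ioi 0))
    (hmul : ∀ t1 t2 : ℝ, 0 < t1 → 0 < t2 →
      f (Real.sqrt (t1 * t2)) ≤ (1 / 2) * f t1 + (1 / 2) * f t2)
    (x s v : Fin (n + 2) → ℝ)
    (hx : inConeInt x) (hs : inConeInt s) (hv : inConeInt v)
    (hc1 : detbar (diam v v) = detbar x * detbar s)
    (hc2 : trace (diam v v) = trace (diam x s))
    (hc3 : (lam1 v) ^ 2 = lam1 x * lam1 s) :
    Psi f v ≤ (1 / 2) * Psi f x + (1 / 2) * Psi f s := by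
  obtain ⟨hav, hbv⟩ := hv
  obtain ⟨hax, hbx⟩ := hx
  obtain ⟨has, hbs⟩ := hs
  have sqrt2_sq : (Real.sqrt 2) ^ 2 = 2 := Real.sq_sqrt (by norm_num)
  have hTv : 0 ≤ enormR (tl v) := enorm_nonneg' _
  have hTx : 0 ≤ enormR (tl x) := enorm_nonneg' _
  have hTs : 0 ≤ enormR (tl s) := enorm_nonneg' _
  have hs2 : 0 ≤ Real.sqrt 2 := Real.sqrt_nonneg 2
  -- lam2 ≤ lam4 everywhere
  have hvbc : lam2 v ≤ lam4 v := by
    unfold lam2 lam4; nlinarith [mul_nonneg hs2 hTv]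
  have hxbc : lam2 x ≤ lam4 x := by
    unfold lam2 lam4; nlinarith [mul_nonneg hs2 hTx]
  have hsbc : lam2 s ≤ lam4 s := by
    unfold lam2 lam4; nlinarith [mul_nonneg hs2 hTs]
  have hcv : 0 < lam4 v := lt_of_lt_of_le hbv hvbc
  have hcx : 0 < lam4 x := lt_of_lt_of_le hbx hxbc
  have hcs : 0 < lam4 s := lt_of_lt_of_le hbs hsbc
  -- eigenvalue identities
  have idv : lam2 v * lam4 v = (v 0 + v 1) ^ 2 - 2 * (enormR (tl v)) ^ 2 := by
    unfold lam2 lam4; linear_combination (-(enormR (tl v)) ^ 2) * sqrt2_sq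
  have idx : lam2 x * lam4 x = (x 0 + x 1) ^ 2 - 2 * (enormR (tl x)) ^ 2 := by
    unfold lam2 lam4; linear_combination (-(enormR (tl x)) ^ 2) * sqrt2_sq
  have ids : lam2 s * lam4 s = (s 0 + s 1) ^ 2 - 2 * (enormR (tl s)) ^ 2 := by
    unfold lam2 lam4; linear_combination (-(enormR (tl s)) ^ 2) * sqrt2_sq
  have idv2 : (lam1 v) ^ 2 + ((lam2 v) ^ 2 + (lam4 v) ^ 2) / 2
      = 2 * ((v 0) ^ 2 + (v 1) ^ 2 + (enormR (tl v)) ^ 2) := by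
    unfold lam1 lam2 lam4; linear_combination ((enormR (tl v)) ^ 2) * sqrt2_sq
  have idxs : lam1 x * lam1 s + (lam2 x * lam2 s + lam4 x * lam4 s) / 2
      = 2 * (x 0 * s 0 + x 1 * s 1 + enormR (tl x) * enormR (tl s)) := by
    unfold lam1 lam2 lam4
    linear_combination (enormR (tl x) * enormR (tl s)) * sqrt2_sq
  -- rewrite the hypotheses
  have e1 : detbar (diam v v) = ((v 0 + v 1) ^ 2 - 2 * (enormR (tl v)) ^ 2) ^ 2 := by
    unfold detbar
    rw [diam_zero, diam_one, dotp_split v v, dotp_tl_self, enorm_tl_diam_self]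
    ring
  have e2 : detbar x = lam2 x * lam4 x := by rw [idx]; rfl
  have e3 : detbar s = lam2 s * lam4 s := by rw [ids]; rfl
  have key1 : (lam2 v * lam4 v) ^ 2 = (lam2 x * lam4 x) * (lam2 s * lam4 s) := by
    rw [idv, ← e1, ← e2, ← e3, hc1]
  have e4 : trace (diam v v) = 2 * ((v 0) ^ 2 + (v 1) ^ 2 + (enormR (tl v)) ^ 2) := by
    unfold trace
    rw [diam_zero, dotp_split v v, dotp_tl_self]; ring
  have e5 : trace (diam x s) = 2 * (x 0 * s 0 + x 1 * s 1 + dotp (tl x) (tl s)) := by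
    unfold trace
    rw [diam_zero, dotp_split x s]
  have cs : dotp (tl x) (tl s) ≤ enormR (tl x) * enormR (tl s) := dotp_le_enorm x s
  have key2 : (lam1 v) ^ 2 + ((lam2 v) ^ 2 + (lam4 v) ^ 2) / 2
      ≤ lam1 x * lam1 s + (lam2 x * lam2 s + lam4 x * lam4 s) / 2 := by
    rw [idv2, idxs]
    rw [e4, e5] at hc2
    linarith
  have key3 : (lam2 v) ^ 2 + (lam4 v) ^ 2 ≤ lam2 x * lam2 s + lam4 x * lam4 s := by
    rw [hc3] at key2; linarith
  -- the geometric means p and q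
  set p := Real.sqrt (lam2 x * lam2 s) with hpdef
  set q := Real.sqrt (lam4 x * lam4 s) with hqdef
  have hPpos : 0 < lam2 x * lam2 s := mul_pos hbx hbs
  have hQpos : 0 < lam4 x * lam4 s := mul_pos hcx hcs
  have hp : 0 < p := Real.sqrt_pos.2 hPpos
  have hq : 0 < q := Real.sqrt_pos.2 hQpos
  have hp2 : p ^ 2 = lam2 x * lam2 s := Real.sq_sqrt hPpos.le
  have hq2 : q ^ 2 = lam4 x * lam4 s := Real.sq_sqrt hQpos.le
  have hpq : p ≤ q := Real.sqrt_le_sqrt (mul_le_mul hxbc hsbc hbs.le hcx.le)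
  have hprod : lam2 v * lam4 v = p * q := by
    have hsq : (lam2 v * lam4 v) ^ 2 = (p * q) ^ 2 := by
      rw [key1, mul_pow, hp2, hq2]; ring
    calc lam2 v * lam4 v = Real.sqrt ((lam2 v * lam4 v) ^ 2) :=
          (Real.sqrt_sq (mul_pos hbv hcv).le).symm
      _ = Real.sqrt ((p * q) ^ 2) := by rw [hsq]
      _ = p * q := Real.sqrt_sq (mul_pos hp hq).le
  have hkey3' : (lam2 v) ^ 2 + (lam4 v) ^ 2 ≤ p ^ 2 + q ^ 2 := by
    rw [hp2, hq2]; exact key3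
  -- majorization: p ≤ lam2 v ≤ lam4 v ≤ q
  obtain ⟨hbp, hcq⟩ := majorize hbv hp hq hpq hprod hkey3'
  -- the convex function g = f ∘ exp
  set g : ℝ → ℝ := fun u => f (Real.exp u) with hgdef
  have hgc : Continuous g := by
    rw [← continuousOn_univ]
    exact hcont.comp Real.continuous_exp.continuousOn
      (fun u _ => Set.mem_Ioi.2 (Real.exp_pos u))
  have hgm : ∀ u w : ℝ, g ((u + w) / 2) ≤ g u / 2 + g w / 2 := by
    intro u w
    have h1 : Real.sqrt (Real.exp u * Real.exp w) = Real.exp ((u + w) / 2) := by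
      rw [show Real.exp u * Real.exp w
          = Real.exp ((u + w) / 2) * Real.exp ((u + w) / 2) by
        rw [← Real.exp_add, ← Real.exp_add]; ring_nf]
      exact Real.sqrt_mul_self (Real.exp_pos _).le
    have h2 := hmul (Real.exp u) (Real.exp w) (Real.exp_pos u) (Real.exp_pos w)
    rw [h1] at h2
    show f (Real.exp ((u + w) / 2)) ≤ f (Real.exp u) / 2 + f (Real.exp w) / 2
    linarith
  have flog : ∀ t : ℝ, 0 < t → g (Real.log t) = f t := by
    intro t ht
    show f (Real.exp (Real.log t)) = f t
    rw [Real.exp_log ht]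
  -- apply two_point on the log scale
  have hlog1 : Real.log p ≤ Real.log (lam2 v) := Real.log_le_log hp hbp
  have hlog2 : Real.log (lam2 v) ≤ Real.log (lam4 v) := Real.log_le_log hbv hvbc
  have hlog3 : Real.log (lam4 v) ≤ Real.log q := Real.log_le_log hcv hcq
  have hlogsum : Real.log (lam2 v) + Real.log (lam4 v) = Real.log p + Real.log q := by
    rw [← Real.log_mul hbv.ne' hcv.ne', ← Real.log_mul hp.ne' hq.ne', hprod]
  have htwo := two_point g hgc hgm hlog1 hlog2 hlog3 hlogsum
  rw [flog _ hbv, flog _ hcv, flog _ hp, flog _ hq] at htwo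
  -- the three midpoint inequalities
  have hfp : f p ≤ (1 / 2) * f (lam2 x) + (1 / 2) * f (lam2 s) := hmul _ _ hbx hbs
  have hfq : f q ≤ (1 / 2) * f (lam4 x) + (1 / 2) * f (lam4 s) := hmul _ _ hcx hcs
  have hfa : f (lam1 v) ≤ (1 / 2) * f (lam1 x) + (1 / 2) * f (lam1 s) := by
    have ha_eq : lam1 v = Real.sqrt (lam1 x * lam1 s) := by
      rw [← hc3, Real.sqrt_sq hav.le]
    rw [ha_eq]
    exact hmul _ _ hax has
  unfold Psi
  linarith

end
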